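/- If u is a word with loc(u) = k and w is the palindrome u a u^R or u u^R (a a letter, u^R the reversal of u), then loc(w) ∈ {2k − 1, 2k, 2k + 1}. -/

import Mathlib

noncomputable section

attribute [local instance] Classical.propDecidable

variable {X : Type*} [DecidableEq X]

/-- Number of maximal blocks of `true`s in a list of booleans, where the first
argument is the preceding symbol. -/
def blocksAux : Bool → List Bool → ℕ
  | _, [] => 0
  | prev, b :: rest => (if b = true ∧ prev = false then 1 else 0) + blocksAux b rest

/-- Number of maximal contiguous blocks of positions of `w` whose letter lies in `S`. -/
def blockCount (w : List X) (S : List X) : ℕ :=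
  blocksAux false (w.map (fun x => decide (x ∈ S)))

/-- `σ` is a marking sequence for `w`: an enumeration, without repetition,
of the alphabet of `w`. -/
def IsMarkingSeq (w σ : List X) : Prop := σ.Nodup ∧ σ.toFinset = w.toFinset

/-- The marking number of the marking sequence `σ` on `w`: the maximum, over all
stages `i`, of the number of maximal contiguous marked blocks after marking the
first `i` letters of `σ`. -/
def markingNumber (w σ : List X) : ℕ :=
  Finset.sup (Finset.range (σ.length + 1)) (fun i => blockCount w (σ.take i))

/-- The locality number of `w`: the minimum marking number over all marking
sequences for `w`. -/
def locality (w : List X) : ℕ :=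
  sInf {n | ∃ σ, IsMarkingSeq w σ ∧ markingNumber w σ = n}

/-! Marking a set of letters in a palindrome `w = u a uᴿ` or `w = u uᴿ` produces the blocks of
`u` twice, except that the two middle ones may merge or be separated by `a`; hence
`2 b(u) ≤ b(w) + 1` and `b(w) ≤ 2 b(u) + 1` for the block counts. An optimal marking sequence
for `w`, restricted to the letters of `u`, passes on `u` through the same stages, which gives
`2 loc(u) ≤ loc(w) + 1`; an optimal one for `u`, followed by the letters of `w` not in `u`, gives
`loc(w) ≤ 2 loc(u) + 1`. -/

lemma blocksAux_le_blocksAux_false (p : Bool) (l : List Bool) :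
    blocksAux p l ≤ blocksAux false l := by
  cases l with
  | nil => simp [blocksAux]
  | cons b t => cases p <;> simp [blocksAux]

lemma blocksAux_false_le_blocksAux_add_one (p : Bool) (l : List Bool) :
    blocksAux false l ≤ blocksAux p l + 1 := by
  cases l with
  | nil => simp [blocksAux]
  | cons b t => cases p <;> simp [blocksAux]; split <;> omega

lemma blocksAux_append (p : Bool) (l₁ l₂ : List Bool) :
    blocksAux p (l₁ ++ l₂) = blocksAux p l₁ + blocksAux (l₁.getLastD p) l₂ := by
  induction l₁ generalizing p with
  | nil => simp [blocksAux]
  | cons b t ih =>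
    rw [List.cons_append, blocksAux, blocksAux, ih b, List.getLastD_cons]
    omega

lemma blocksAux_false_reverse (l : List Bool) :
    blocksAux false l.reverse = blocksAux false l := by
  induction l with
  | nil => rfl
  | cons b t ih =>
    have hlast : t.reverse.getLastD false = t.headD false := by
      cases t <;> simp [List.getLastD_eq_getLast?, List.getLast?_reverse]
    rw [List.reverse_cons, blocksAux_append, ih, hlast]
    cases b with
    | false => simp [blocksAux]
    | true =>
      cases t with
      | nil => simp [blocksAux]
      | cons c t' => cases c <;> simp [blocksAux]; omega

section blockCount

variable (u v S : List X)

lemma blockCount_congr {w S T : List X} (h : ∀ x ∈ w, x ∈ S ↔ x ∈ T) :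
    blockCount w S = blockCount w T := by
  unfold blockCount
  congr 1
  exact List.map_congr_left fun x hx => decide_eq_decide.mpr (h x hx)

lemma blockCount_append_le : blockCount (u ++ v) S ≤ blockCount u S + blockCount v S := by
  unfold blockCount
  rw [List.map_append, blocksAux_append]
  have := blocksAux_le_blocksAux_false ((u.map fun x => decide (x ∈ S)).getLastD false)
    (v.map fun x => decide (x ∈ S))
  omega

lemma blockCount_add_le_blockCount_append_add_one :
    blockCount u S + blockCount v S ≤ blockCount (u ++ v) S + 1 := by
  unfold blockCount
  rw [List.map_append, blocksAux_append]
  have := blocksAux_false_le_blocksAux_add_one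
    ((u.map fun x => decide (x ∈ S)).getLastD false) (v.map fun x => decide (x ∈ S))
  omega

lemma blockCount_cons_le (a : X) : blockCount (a :: v) S ≤ blockCount v S + 1 := by
  unfold blockCount
  rw [List.map_cons, blocksAux]
  have := blocksAux_le_blocksAux_false (decide (a ∈ S)) (v.map fun x => decide (x ∈ S))
  split <;> omega

lemma blockCount_le_blockCount_cons (a : X) : blockCount v S ≤ blockCount (a :: v) S := by
  unfold blockCount
  rw [List.map_cons, blocksAux]
  have := blocksAux_false_le_blocksAux_add_one (decide (a ∈ S)) (v.map fun x => decide (x ∈ S))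
  generalize decide (a ∈ S) = b at this ⊢
  cases b <;> simp at this ⊢; omega

@[simp]
lemma blockCount_reverse : blockCount u.reverse S = blockCount u S := by
  rw [blockCount, List.map_reverse, blocksAux_false_reverse, blockCount]

end blockCount

section palindrome

variable (u S : List X) (a : X)

lemma blockCount_append_reverse_le : blockCount (u ++ u.reverse) S ≤ 2 * blockCount u S := by
  have := blockCount_append_le u u.reverse S
  simp only [blockCount_reverse] at this
  omega

lemma two_mul_blockCount_le_blockCount_append_reverse_add_one :
    2 * blockCount u S ≤ blockCount (u ++ u.reverse) S + 1 := by
  have := blockCount_add_le_blockCount_append_add_one u u.reverse S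
  simp only [blockCount_reverse] at this
  omega

lemma blockCount_append_cons_reverse_le :
    blockCount (u ++ a :: u.reverse) S ≤ 2 * blockCount u S + 1 := by
  have := blockCount_append_le u (a :: u.reverse) S
  have := blockCount_cons_le u.reverse S a
  simp only [blockCount_reverse] at *
  omega

lemma two_mul_blockCount_le_blockCount_append_cons_reverse_add_one :
    2 * blockCount u S ≤ blockCount (u ++ a :: u.reverse) S + 1 := by
  have := blockCount_add_le_blockCount_append_add_one u (a :: u.reverse) S
  have := blockCount_le_blockCount_cons u.reverse S a
  simp only [blockCount_reverse] at *
  omega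

end palindrome

lemma IsMarkingSeq.mem_iff {w σ : List X} (h : IsMarkingSeq w σ) {x : X} : x ∈ σ ↔ x ∈ w := by
  simpa using Finset.ext_iff.mp h.2 x

lemma exists_isMarkingSeq_markingNumber_eq_locality (w : List X) :
    ∃ σ, IsMarkingSeq w σ ∧ markingNumber w σ = locality w :=
  Nat.sInf_mem (s := {n | ∃ σ, IsMarkingSeq w σ ∧ markingNumber w σ = n})
    ⟨_, w.dedup, ⟨w.nodup_dedup, by ext; simp⟩, rfl⟩

lemma locality_le_markingNumber {w σ : List X} (h : IsMarkingSeq w σ) :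
    locality w ≤ markingNumber w σ :=
  Nat.sInf_le ⟨σ, h, rfl⟩

lemma blockCount_take_le_markingNumber (w σ : List X) (j : ℕ) :
    blockCount w (σ.take j) ≤ markingNumber w σ := by
  rw [List.take_eq_take_min]
  exact Finset.le_sup (f := fun i => blockCount w (σ.take i)) (by simp)

lemma markingNumber_le_of_forall_exists_take {h : ℕ → ℕ} (hh : Monotone h) {v w σ τ : List X}
    (hst : ∀ i, ∃ j, blockCount v (τ.take i) ≤ h (blockCount w (σ.take j))) :
    markingNumber v τ ≤ h (markingNumber w σ) :=
  Finset.sup_le fun i _ =>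
    let ⟨j, hj⟩ := hst i
    hj.trans (hh (blockCount_take_le_markingNumber w σ j))

lemma exists_take_filter_eq_take_filter {α : Type*} (p : α → Bool) (l : List α) (i : ℕ) :
    ∃ j, (l.take j).filter p = (l.filter p).take i := by
  induction l generalizing i with
  | nil => exact ⟨0, by simp⟩
  | cons b t ih =>
    cases i with
    | zero => exact ⟨0, by simp⟩
    | succ i =>
      by_cases hb : p b
      · obtain ⟨j, h⟩ := ih i
        exact ⟨j + 1, by simp [hb, h]⟩
      · obtain ⟨j, h⟩ := ih (i + 1)
        exact ⟨j + 1, by simp [hb, h]⟩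

section restriction

variable {h : ℕ → ℕ} {u w : List X}

lemma locality_le_of_subset (hh : Monotone h) (hsub : u ⊆ w)
    (hb : ∀ S, blockCount u S ≤ h (blockCount w S)) : locality u ≤ h (locality w) := by
  obtain ⟨σ, hσ, hσw⟩ := exists_isMarkingSeq_markingNumber_eq_locality w
  let p : X → Bool := fun x => decide (x ∈ u)
  have hτ : IsMarkingSeq u (σ.filter p) := by
    refine ⟨hσ.1.filter p, ?_⟩
    ext x
    simpa [p, hσ.mem_iff] using fun hx => hsub hx
  calc locality u ≤ markingNumber u (σ.filter p) := locality_le_markingNumber hτ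
    _ ≤ h (markingNumber w σ) := markingNumber_le_of_forall_exists_take hh fun i => by
        obtain ⟨j, hj⟩ := exists_take_filter_eq_take_filter p σ i
        refine ⟨j, ?_⟩
        rw [← hj, blockCount_congr (T := σ.take j) fun x hx => by simp [p, hx]]
        exact hb _
    _ = h (locality w) := by rw [hσw]

lemma locality_le_of_superset (hh : Monotone h) (hsub : u ⊆ w)
    (hb : ∀ S, blockCount w S ≤ h (blockCount u S)) : locality w ≤ h (locality u) := by
  obtain ⟨σ, hσ, hσu⟩ := exists_isMarkingSeq_markingNumber_eq_locality u
  set ρ := w.dedup.filter fun x => decide (x ∉ u)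
  have hρ : ∀ x ∈ ρ, x ∉ u := fun x hx => by simpa [ρ] using (List.mem_filter.mp hx).2
  have hτ : IsMarkingSeq w (σ ++ ρ) := by
    refine ⟨List.nodup_append.mpr ⟨hσ.1, w.nodup_dedup.filter _, ?_⟩, ?_⟩
    · exact fun x hx y hy hxy => hρ y hy (hxy ▸ hσ.mem_iff.mp hx)
    · ext x
      simp only [List.mem_toFinset, List.mem_append, hσ.mem_iff, ρ, List.mem_filter,
        List.mem_dedup, decide_eq_true_eq]
      by_cases hx : x ∈ u
      · simp [hx, hsub hx]
      · simp [hx]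
  calc locality w ≤ markingNumber w (σ ++ ρ) := locality_le_markingNumber hτ
    _ ≤ h (markingNumber u σ) := markingNumber_le_of_forall_exists_take hh fun i => by
        refine ⟨i, ?_⟩
        rw [blockCount_congr (w := u) (S := σ.take i) (T := (σ ++ ρ).take i) fun x hx => ?_]
        · exact hb _
        · rw [List.take_append, List.mem_append]
          exact (or_iff_left fun hxρ => hρ x (List.mem_of_mem_take hxρ) hx).symm
    _ = h (locality u) := by rw [hσu]

end restriction

/-- If `loc(u) = k`, then the palindromes `u a u^R` and `u u^R` have locality
number in `{2k - 1, 2k, 2k + 1}`. -/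
theorem locality_palindrome_mem (u : List X) (a : X) (k : ℕ)
    (hk : locality u = k) :
    (locality (u ++ a :: u.reverse) = 2 * k - 1 ∨
      locality (u ++ a :: u.reverse) = 2 * k ∨
      locality (u ++ a :: u.reverse) = 2 * k + 1) ∧
    (locality (u ++ u.reverse) = 2 * k - 1 ∨
      locality (u ++ u.reverse) = 2 * k ∨
      locality (u ++ u.reverse) = 2 * k + 1) := by
  have key : ∀ w : List X, u ⊆ w → (∀ S, 2 * blockCount u S ≤ blockCount w S + 1) →
      (∀ S, blockCount w S ≤ 2 * blockCount u S + 1) →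
      2 * k ≤ locality w + 1 ∧ locality w ≤ 2 * k + 1 := by
    intro w hsub hlo hhi
    have hl := locality_le_of_subset (h := fun n => (n + 1) / 2)
      (fun _ _ _ => by dsimp only; omega) hsub fun S => by have := hlo S; omega
    have hu := locality_le_of_superset (h := fun n => 2 * n + 1)
      (fun _ _ _ => by dsimp only; omega) hsub hhi
    omega
  obtain ⟨h₁, h₂⟩ := key _ (List.subset_append_left _ _)
    (two_mul_blockCount_le_blockCount_append_cons_reverse_add_one u · a)
    (blockCount_append_cons_reverse_le u · a)
  obtain ⟨h₃, h₄⟩ := key _ (List.subset_append_left _ _)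
    (two_mul_blockCount_le_blockCount_append_reverse_add_one u)
    fun S => (blockCount_append_reverse_le u S).trans (Nat.le_succ _)
  omega
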